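/- Equivalence of feature mappings preserves regularized quadratic forms: Let ψ : X → R^p and φ : X → R^N be feature mappings on a finite set X = {a_1,…,a_N} with ⟨ψ(x), ψ(x')⟩ = ⟨φ(x), φ(x')⟩ for all x, x' ∈ X. For a probability distribution P on X and λ > 0 define S_ψ(P,λ) = Σ_x P(x)ψ(x)ψ(x)ᵀ + λI_p and S_φ(P,λ) = Σ_x P(x)φ(x)φ(x)ᵀ + λI_N. Then for all x, x' ∈ X: φ(x)ᵀ S_φ(P,λ)^{-1} φ(x') = ψ(x)ᵀ S_ψ(P,λ)^{-1} ψ(x'). -/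
import Mathlib

open Matrix

/-- Regularized design matrix `S(P, λ) = ∑ₓ P(x) φ(x)φ(x)ᵀ + λ I`. -/
noncomputable def designMat {α : Type*} [Fintype α] {p : ℕ} (φ : α → Fin p → ℝ)
    (P : α → ℝ) (lam : ℝ) : Matrix (Fin p) (Fin p) ℝ :=
  ∑ x, P x • Matrix.vecMulVec (φ x) (φ x) + lam • 1

lemma smul_one_posDef {n : Type*} [Fintype n] [DecidableEq n] {lam : ℝ} (hlam : 0 < lam) :
    ((lam • 1 : Matrix n n ℝ)).PosDef := by
  rw [Matrix.smul_one_eq_diagonal]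
  exact Matrix.PosDef.diagonal (fun _ => hlam)

lemma regularized_posDef {n : Type*} [Fintype n] [DecidableEq n] {β : Type*} [Fintype β]
    (Φ : Matrix n β ℝ) {lam : ℝ} (hlam : 0 < lam) :
    (Φ * Φᵀ + lam • 1).PosDef := by
  have h1 : (Φ * Φᵀ).PosSemidef := by
    have := Matrix.posSemidef_self_mul_conjTranspose Φ
    simpa using this
  exact Matrix.PosDef.posSemidef_add h1 (smul_one_posDef hlam)

lemma key_identity {β : Type*} [Fintype β] [DecidableEq β] {p : ℕ}
    (Φ : Matrix β (Fin p) ℝ) (lam : ℝ) (hlam : 0 < lam) (u v : Fin p → ℝ) :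
    u ⬝ᵥ ((Φᵀ * Φ + lam • 1)⁻¹ *ᵥ v)
      = (1/lam) * (u ⬝ᵥ v - (Φ *ᵥ u) ⬝ᵥ ((Φ * Φᵀ + lam • 1)⁻¹ *ᵥ (Φ *ᵥ v))) := by
  have hcomm0 : (Φᵀ * Φ + lam • 1) * Φᵀ = Φᵀ * (Φ * Φᵀ + lam • 1) := by
    rw [Matrix.add_mul, Matrix.mul_add, Matrix.smul_mul, Matrix.mul_smul, Matrix.one_mul,
      Matrix.mul_one, Matrix.mul_assoc]
  set A : Matrix (Fin p) (Fin p) ℝ := Φᵀ * Φ + lam • 1 with hA'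
  set B : Matrix β β ℝ := Φ * Φᵀ + lam • 1 with hB'
  have hA : A.PosDef := by
    have := regularized_posDef Φᵀ hlam
    simpa [hA'] using this
  have hB : B.PosDef := regularized_posDef Φ hlam
  have hAdet : IsUnit A.det := (Matrix.isUnit_iff_isUnit_det _).1 hA.isUnit
  have hBdet : IsUnit B.det := (Matrix.isUnit_iff_isUnit_det _).1 hB.isUnit
  have hcomm : A * Φᵀ = Φᵀ * B := hcomm0
  have hswap : A⁻¹ * Φᵀ = Φᵀ * B⁻¹ := by
    calc A⁻¹ * Φᵀ
        = A⁻¹ * Φᵀ * (B * B⁻¹) := by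
          rw [Matrix.mul_nonsing_inv _ hBdet, Matrix.mul_one]
      _ = A⁻¹ * (Φᵀ * B) * B⁻¹ := by simp only [Matrix.mul_assoc]
      _ = A⁻¹ * (A * Φᵀ) * B⁻¹ := by rw [hcomm]
      _ = (A⁻¹ * A) * Φᵀ * B⁻¹ := by simp only [Matrix.mul_assoc]
      _ = Φᵀ * B⁻¹ := by rw [Matrix.nonsing_inv_mul _ hAdet, Matrix.one_mul]
  have hAinv : A⁻¹ = (1/lam) • ((1 : Matrix (Fin p) (Fin p) ℝ) - Φᵀ * B⁻¹ * Φ) := by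
    have h1 : lam • A⁻¹ = 1 - Φᵀ * B⁻¹ * Φ := by
      have h2 : A⁻¹ * (lam • (1 : Matrix (Fin p) (Fin p) ℝ)) = lam • A⁻¹ := by
        rw [Matrix.mul_smul, Matrix.mul_one]
      rw [← h2]
      have hsub : (lam • (1 : Matrix (Fin p) (Fin p) ℝ)) = A - Φᵀ * Φ := by
        rw [hA']; exact (add_sub_cancel_left _ _).symm
      rw [hsub, Matrix.mul_sub, Matrix.nonsing_inv_mul _ hAdet, ← Matrix.mul_assoc, hswap]
    rw [← h1, smul_smul, one_div, inv_mul_cancel₀ hlam.ne', one_smul]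
  rw [hAinv, Matrix.smul_mulVec, dotProduct_smul, smul_eq_mul]
  congr 1
  rw [Matrix.sub_mulVec, dotProduct_sub, Matrix.one_mulVec]
  congr 1
  rw [← Matrix.mulVec_mulVec, ← Matrix.mulVec_mulVec, Matrix.dotProduct_mulVec,
    Matrix.vecMul_transpose]

theorem stmt12 {α : Type*} [Fintype α] {p N : ℕ} (hcard : Fintype.card α = N)
    (ψ : α → Fin p → ℝ) (φ : α → Fin N → ℝ)
    (hequiv : ∀ x x', ψ x ⬝ᵥ ψ x' = φ x ⬝ᵥ φ x')
    (P : α → ℝ) (hP0 : ∀ x, 0 ≤ P x) (hP1 : ∑ x, P x = 1)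
    (lam : ℝ) (hlam : 0 < lam) (x x' : α) :
    φ x ⬝ᵥ ((designMat φ P lam)⁻¹ *ᵥ φ x')
      = ψ x ⬝ᵥ ((designMat ψ P lam)⁻¹ *ᵥ ψ x') := by
  classical
  set Φ : Matrix α (Fin p) ℝ := Matrix.of (fun a i => Real.sqrt (P a) * ψ a i) with hΦ
  set Ψ : Matrix α (Fin N) ℝ := Matrix.of (fun a i => Real.sqrt (P a) * φ a i) with hΨ
  have hd : ∀ {q : ℕ} (f : α → Fin q → ℝ),
      designMat f P lam = (Matrix.of (fun a i => Real.sqrt (P a) * f a i))ᵀ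
        * (Matrix.of (fun a i => Real.sqrt (P a) * f a i)) + lam • 1 := by
    intro q f
    unfold designMat
    congr 1
    ext i j
    simp only [Matrix.sum_apply, Matrix.smul_apply, Matrix.vecMulVec_apply,
      Matrix.mul_apply, Matrix.transpose_apply, Matrix.of_apply, smul_eq_mul]
    apply Finset.sum_congr rfl
    intro a _
    have h : Real.sqrt (P a) * Real.sqrt (P a) = P a := Real.mul_self_sqrt (hP0 a)
    rw [show Real.sqrt (P a) * f a i * (Real.sqrt (P a) * f a j)
        = Real.sqrt (P a) * Real.sqrt (P a) * (f a i * f a j) from by ring, h]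
  rw [hd ψ, hd φ, key_identity _ lam hlam, key_identity _ lam hlam]
  have hmvx : Φ *ᵥ ψ x = Ψ *ᵥ φ x := by
    ext b
    simp only [Matrix.mulVec, dotProduct, hΦ, hΨ, Matrix.of_apply, mul_assoc,
      ← Finset.mul_sum]
    congr 1
    simpa [dotProduct] using hequiv b x
  have hmvx' : Φ *ᵥ ψ x' = Ψ *ᵥ φ x' := by
    ext b
    simp only [Matrix.mulVec, dotProduct, hΦ, hΨ, Matrix.of_apply, mul_assoc,
      ← Finset.mul_sum]
    congr 1
    simpa [dotProduct] using hequiv b x'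
  have hgram : Φ * Φᵀ = Ψ * Ψᵀ := by
    ext a b
    simp only [Matrix.mul_apply, Matrix.transpose_apply, hΦ, hΨ, Matrix.of_apply]
    have h : ∀ {q : ℕ} (f : α → Fin q → ℝ),
        ∑ i, (Real.sqrt (P a) * f a i) * (Real.sqrt (P b) * f b i)
          = Real.sqrt (P a) * Real.sqrt (P b) * (f a ⬝ᵥ f b) := by
      intro q f
      simp only [dotProduct, Finset.mul_sum]
      apply Finset.sum_congr rfl; intro i _; ring
    rw [h ψ, h φ, hequiv a b]
  rw [hmvx, hmvx', hgram, hequiv x x']
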